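/- Let $G = \bigoplus_{p \in P} \mathbb{Z}/p\mathbb{Z}$ for a multiset of primes $P$, let $X$ be an ergodic $G$-system, and let $q: G \times X \to S^1$ be both a phase polynomial of degree $< d$ (in the $X$ variable, for each $g$) and a cocycle. Then for each $g \in G$, the function $q(g, \cdot)$ takes values in the cyclic group $C_m$ of $m$-th roots of unity, where $m = \mathrm{ord}(g)^d$. -/
import Mathlib

open MeasureTheory DirectSum

variable {G X : Type*}

noncomputable def polyDisc (T : G → X → X) (h : G) (φ : X → Circle) : X → Circle :=
  fun x => φ (T h x) * (φ x)⁻¹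

def IsPhasePoly [MeasurableSpace X] (μ : Measure X) (T : G → X → X)
    (d : ℕ) (φ : X → Circle) : Prop :=
  ∀ hs : Fin d → G, ∀ᵐ x ∂μ, (List.ofFn hs).foldr (polyDisc T) φ x = 1

section Aux

variable [AddCommMonoid G] {T : G → X → X}

lemma polyDisc_mul (h : G) (φ ψ : X → Circle) :
    polyDisc T h (fun x => φ x * ψ x) = fun x => polyDisc T h φ x * polyDisc T h ψ x := by
  funext x
  simp only [polyDisc, mul_inv]
  simp [mul_comm, mul_left_comm, mul_assoc]

lemma polyDisc_comm (hTadd : ∀ g h : G, ∀ x, T (g + h) x = T g (T h x)) (h h' : G) (φ : X → Circle) :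
    polyDisc T h (polyDisc T h' φ) = polyDisc T h' (polyDisc T h φ) := by
  funext x
  simp only [polyDisc, mul_inv, inv_inv]
  rw [← hTadd h' h, add_comm h' h, hTadd h h']
  simp [mul_comm, mul_left_comm, mul_assoc]

lemma foldr_polyDisc_mul (c : List G) (φ ψ : X → Circle) :
    c.foldr (polyDisc T) (fun x => φ x * ψ x)
      = fun x => c.foldr (polyDisc T) φ x * c.foldr (polyDisc T) ψ x := by
  induction c with
  | nil => rfl
  | cons a c ih => simp only [List.foldr_cons, ih, polyDisc_mul]

lemma foldr_polyDisc_comm (hTadd : ∀ g h : G, ∀ x, T (g + h) x = T g (T h x)) (c : List G) (h : G) (φ : X → Circle) :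
    c.foldr (polyDisc T) (polyDisc T h φ) = polyDisc T h (c.foldr (polyDisc T) φ) := by
  induction c with
  | nil => rfl
  | cons a c ih =>
    simp only [List.foldr_cons, ih]
    exact polyDisc_comm hTadd a h _

lemma foldr_polyDisc_one (c : List G) :
    c.foldr (polyDisc T) (fun _ => (1 : Circle)) = fun _ => 1 := by
  induction c with
  | nil => rfl
  | cons a c ih =>
    simp only [List.foldr_cons, ih]
    funext x; simp [polyDisc]

lemma foldr_polyDisc_pow (c : List G) (φ : X → Circle) (n : ℕ) :
    c.foldr (polyDisc T) (fun x => φ x ^ n)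
      = fun x => c.foldr (polyDisc T) φ x ^ n := by
  induction n with
  | zero =>
    simp only [pow_zero]
    induction c with
    | nil => rfl
    | cons a c ih =>
      simp only [List.foldr_cons, ih]
      funext x; simp [polyDisc]
  | succ n ih =>
    simp only [pow_succ]
    rw [show (fun x => φ x ^ n * φ x) = (fun x => (fun y => φ y ^ n) x * φ x) from rfl,
      foldr_polyDisc_mul, ih]

lemma foldr_polyDisc_prod (c : List G) (n : ℕ) (F : ℕ → X → Circle) :
    c.foldr (polyDisc T) (fun x => ∏ j ∈ Finset.range n, F j x)
      = fun x => ∏ j ∈ Finset.range n, c.foldr (polyDisc T) (F j) x := by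
  induction n with
  | zero =>
    simp only [Finset.range_zero, Finset.prod_empty]
    induction c with
    | nil => rfl
    | cons a c ih =>
      simp only [List.foldr_cons, ih]
      funext x; simp [polyDisc]
  | succ n ih =>
    simp only [Finset.prod_range_succ]
    rw [show (fun x => (∏ j ∈ Finset.range n, F j x) * F n x)
        = (fun x => (fun y => ∏ j ∈ Finset.range n, F j y) x * F n x) from rfl,
      foldr_polyDisc_mul, ih]

end Aux

section AE

variable [AddCommMonoid G] [MeasurableSpace X] {μ : Measure X} {T : G → X → X}

lemma polyDisc_ae_congr (hT : ∀ g : G, MeasurePreserving (T g) μ μ) (h : G) {φ ψ : X → Circle} (hφψ : ∀ᵐ x ∂μ, φ x = ψ x) :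
    ∀ᵐ x ∂μ, polyDisc T h φ x = polyDisc T h ψ x := by
  have h2 : ∀ᵐ x ∂μ, φ (T h x) = ψ (T h x) :=
    (hT h).quasiMeasurePreserving.ae hφψ
  filter_upwards [hφψ, h2] with x h1 h2
  simp [polyDisc, h1, h2]

lemma foldr_polyDisc_ae_congr (hT : ∀ g : G, MeasurePreserving (T g) μ μ) (c : List G) {φ ψ : X → Circle}
    (hφψ : ∀ᵐ x ∂μ, φ x = ψ x) :
    ∀ᵐ x ∂μ, c.foldr (polyDisc T) φ x = c.foldr (polyDisc T) ψ x := by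
  induction c with
  | nil => exact hφψ
  | cons a c ih => exact polyDisc_ae_congr hT a ih

end AE

/-- Values of phase polynomial cocycles: over `G = ⨁_{p ∈ P} ℤ/pℤ`, a cocycle which is
a phase polynomial of degree `< d` takes, at `g`, values in the `ord(g)^d`-th roots of
unity. -/
theorem phase_polynomial_cocycle_values
    {ι : Type*} [DecidableEq ι] [Countable ι] (p : ι → ℕ) (hp : ∀ i, (p i).Prime)
    [MeasurableSpace X] (μ : Measure X) [IsProbabilityMeasure μ]
    (T : (⨁ i, ZMod (p i)) → X → X)
    (hT : ∀ g, MeasurePreserving (T g) μ μ)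
    (hTadd : ∀ g h : ⨁ i, ZMod (p i), ∀ x, T (g + h) x = T g (T h x))
    (hErg : ∀ s : Set X, MeasurableSet s → (∀ g, T g ⁻¹' s = s) → μ s = 0 ∨ μ s = 1)
    (d : ℕ) (q : (⨁ i, ZMod (p i)) → X → Circle)
    (hcoc : ∀ g g' : ⨁ i, ZMod (p i), ∀ᵐ x ∂μ, q (g + g') x = q g x * q g' (T g x))
    (hpoly : ∀ g, IsPhasePoly μ T d (q g)) :
    ∀ g : ⨁ i, ZMod (p i), ∀ᵐ x ∂μ, (q g x) ^ (addOrderOf g ^ d) = 1 := by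
  intro g
  set n := addOrderOf g with hn
  -- telescoping identity
  have htel : ∀ m : ℕ, ∀ᵐ x ∂μ, q ((m + 1) • g) x
      = q g x * ∏ j ∈ Finset.range m, q g (T ((j + 1) • g) x) := by
    intro m
    induction m with
    | zero => simp
    | succ m ih =>
      have hc := hcoc ((m + 1) • g) g
      filter_upwards [ih, hc] with x h1 h2
      have : (m + 1 + 1) • g = (m + 1) • g + g := by rw [add_smul, one_smul]
      rw [this, h2, h1, Finset.prod_range_succ, mul_assoc]
  -- key identity (A)
  have hA : ∀ᵐ x ∂μ, (1 : Circle)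
      = q g x ^ n * ∏ j ∈ Finset.range n, polyDisc T ((j + 1) • g) (q g) x := by
    have h1 := htel n
    have h2 : (n + 1) • g = g := by
      rw [add_smul, one_smul, hn, addOrderOf_nsmul_eq_zero, zero_add]
    filter_upwards [h1] with x h1
    rw [h2] at h1
    have h3 : ∀ j : ℕ, q g (T ((j + 1) • g) x) = q g x * polyDisc T ((j + 1) • g) (q g) x := by
      intro j; simp [polyDisc]
    calc (1 : Circle) = (q g x)⁻¹ * q g x := by group
      _ = (q g x)⁻¹ * (q g x * ∏ j ∈ Finset.range n, q g (T ((j + 1) • g) x)) := by rw [← h1]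
      _ = ∏ j ∈ Finset.range n, q g (T ((j + 1) • g) x) := by group
      _ = ∏ j ∈ Finset.range n, (q g x * polyDisc T ((j + 1) • g) (q g) x) := by
          exact Finset.prod_congr rfl fun j _ => h3 j
      _ = q g x ^ n * ∏ j ∈ Finset.range n, polyDisc T ((j + 1) • g) (q g) x := by
          rw [Finset.prod_mul_distrib, Finset.prod_const, Finset.card_range]
  -- main downward induction
  have key : ∀ t : ℕ, ∀ c : List (⨁ i, ZMod (p i)), c.length + t = d →
      ∀ᵐ x ∂μ, (c.foldr (polyDisc T) (q g) x) ^ n ^ t = 1 := by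
    intro t
    induction t with
    | zero =>
      intro c hc
      simp only [add_zero] at hc
      have h1 := hpoly g (fun i : Fin d => c.get (Fin.cast hc.symm i))
      have h2 : List.ofFn (fun i : Fin d => c.get (Fin.cast hc.symm i)) = c := by
        subst hc
        simp [List.ofFn_get]
      rw [h2] at h1
      filter_upwards [h1] with x h1
      simpa using h1
    | succ t ih =>
      intro c hc
      -- apply D_c to (A)
      have hDA := foldr_polyDisc_ae_congr hT c hA
      have hIH : ∀ j : ℕ, ∀ᵐ x ∂μ, j < n →
          (((j + 1) • g :: c).foldr (polyDisc T) (q g) x) ^ n ^ t = 1 := by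
        intro j
        by_cases hj : j < n
        · filter_upwards [ih (((j + 1) • g) :: c)
            (by simpa [Nat.succ_eq_add_one, add_assoc, add_comm 1 t] using hc)] with x hx _
          exact hx
        · filter_upwards with x hj'; exact absurd hj' hj
      have hIH' : ∀ᵐ x ∂μ, ∀ j : ℕ, j < n →
          (((j + 1) • g :: c).foldr (polyDisc T) (q g) x) ^ n ^ t = 1 :=
        ae_all_iff.2 hIH
      filter_upwards [hDA, hIH'] with x hDA hIH'
      -- rewrite RHS of hDA
      rw [show (fun x => q g x ^ n * ∏ j ∈ Finset.range n, polyDisc T ((j + 1) • g) (q g) x)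
            = (fun x => (fun y => q g y ^ n) x
              * (fun y => ∏ j ∈ Finset.range n, polyDisc T ((j + 1) • g) (q g) y) x) from rfl,
        foldr_polyDisc_mul, foldr_polyDisc_pow,
        foldr_polyDisc_prod] at hDA
      have hDA2 : (1 : Circle) = c.foldr (polyDisc T) (q g) x ^ n
          * ∏ j ∈ Finset.range n, (((j + 1) • g :: c).foldr (polyDisc T) (q g)) x := by
        have hcomm : ∀ j : ℕ, c.foldr (polyDisc T) (polyDisc T ((j + 1) • g) (q g))
            = ((j + 1) • g :: c).foldr (polyDisc T) (q g) := by
          intro j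
          rw [List.foldr_cons, ← foldr_polyDisc_comm hTadd]
        calc (1 : Circle) = c.foldr (polyDisc T) (fun _ => (1:Circle)) x := by
              rw [foldr_polyDisc_one]
          _ = _ := by
              rw [hDA]
              simp only [← hcomm]
      have := congrArg (· ^ n ^ t) hDA2
      simp only [one_pow, mul_pow, ← pow_mul] at this
      rw [show n * n ^ t = n ^ (t + 1) by ring] at this
      rw [this, ← Finset.prod_pow]
      have : ∀ j ∈ Finset.range n, (((j + 1) • g :: c).foldr (polyDisc T) (q g)) x ^ n ^ t = 1 := by
        intro j hj
        exact hIH' j (Finset.mem_range.1 hj)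
      rw [Finset.prod_congr rfl this]
      simp
  have := key d [] (by simp)
  filter_upwards [this] with x hx
  simpa using hx
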